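/- arXiv:1608.03962 — 3 statements merged into one kernel-verified Lean document; each statement's English description precedes it below -/
import Mathlib

section
/- Let p, q ∈ ℝ with p ≠ 0, and let G be the antisymmetric function on ordered triples of indices from {1,…,6} determined by setting G_{213} = G_{124} = G_{136} = G_{145} = G_{516} = G_{235} = G_{246} = G_{256} = G_{435} = G_{346} = p and G_{215} = G_{216} = G_{314} = G_{135} = G_{146} = G_{324} = G_{236} = G_{245} = G_{536} = G_{546} = q (and G_{ijk} = 0 whenever two indices coincide). If G satisfies the Plücker relation G_{123}·G_{345} = G_{423}·G_{315} + G_{523}·G_{341}, then q = φ·p or q = (1−φ)·p, where φ = (1+√5)/2. -/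
noncomputable def phi : ℝ := (1 + Real.sqrt 5) / 2

/-!
Only six values of `G` enter the Plücker relation, and antisymmetry reads each of them off the
prescribed values: the relation becomes `(-p)(-p) = (-q)(-q) + p(-q)`, i.e. `q² = pq + p²`,
whose roots in `q` are `φp` and `ψp = (1 - φ)p`.
-/

open Real goldenRatio

theorem phi_eq_goldenRatio : phi = φ := rfl

theorem apply_eq_apply_rotate_of_antisymm {ι R : Type*} [InvolutiveNeg R] {G : ι → ι → ι → R}
    (h12 : ∀ i j k, G i j k = -G j i k) (h23 : ∀ i j k, G i j k = -G i k j) (i j k : ι) :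
    G i j k = G j k i := by
  rw [h12, h23, neg_neg]

theorem eq_goldenRatio_mul_or_eq_goldenConj_mul {p q : ℝ} (h : q ^ 2 = p * q + p ^ 2) :
    q = φ * p ∨ q = ψ * p := by
  have hfactor : (q - φ * p) * (q - ψ * p) = 0 := by
    linear_combination h - p * q * goldenRatio_add_goldenConj + p ^ 2 * goldenRatio_mul_goldenConj
  simpa only [mul_eq_zero, sub_eq_zero] using hfactor

theorem plucker_forces_golden_ratio_general (p q : ℝ) (G : Fin 6 → Fin 6 → Fin 6 → ℝ)
    (hswap12 : ∀ i j k, G i j k = -G j i k)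
    (hswap23 : ∀ i j k, G i j k = -G i k j)
    -- prolate values: G_{213} = G_{124} = G_{136} = G_{145} = G_{516}
    --               = G_{235} = G_{246} = G_{256} = G_{435} = G_{346} = p
    (hp1 : G 1 0 2 = p) (hp6 : G 1 2 4 = p) (hp9 : G 3 2 4 = p)
    -- oblate values: G_{215} = G_{216} = G_{314} = G_{135} = G_{146}
    --              = G_{324} = G_{236} = G_{245} = G_{536} = G_{546} = q
    (hq3 : G 2 0 3 = q) (hq4 : G 0 2 4 = q) (hq6 : G 2 1 3 = q)
    -- the Plücker relation G_{123}·G_{345} = G_{423}·G_{315} + G_{523}·G_{341}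
    (hplucker : G 0 1 2 * G 2 3 4 = G 3 1 2 * G 2 0 4 + G 4 1 2 * G 2 3 0) :
    q = phi * p ∨ q = (1 - phi) * p := by
  have rotate := apply_eq_apply_rotate_of_antisymm hswap12 hswap23
  have h012 : G 0 1 2 = -p := by rw [hswap12, hp1]
  have h234 : G 2 3 4 = -p := by rw [hswap12, hp9]
  have h312 : G 3 1 2 = -q := by rw [rotate, hswap12, hq6]
  have h204 : G 2 0 4 = -q := by rw [hswap12, hq4]
  have h412 : G 4 1 2 = p := by rw [rotate, hp6]
  have h230 : G 2 3 0 = -q := by rw [← rotate, hswap12, hq3]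
  rw [h012, h234, h312, h204, h412, h230] at hplucker
  rw [phi_eq_goldenRatio, one_sub_goldenConj]
  exact eq_goldenRatio_mul_or_eq_goldenConj_mul (by linear_combination -hplucker)

/-- Let `G` be an antisymmetric function on ordered triples of indices from `Fin 6`
(indices are 0-based, so the paper's index `n` is `n-1` here), whose values on the
prolate triples are `p` and on the oblate triples are `q`, with `p ≠ 0`.  If `G`
satisfies the Plücker relation `G₁₂₃·G₃₄₅ = G₄₂₃·G₃₁₅ + G₅₂₃·G₃₄₁`, then `q = φ·p`
or `q = (1−φ)·p`. -/
theorem plucker_forces_golden_ratio (p q : ℝ) (hp : p ≠ 0) (G : Fin 6 → Fin 6 → Fin 6 → ℝ)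
    (hswap12 : ∀ i j k, G i j k = -G j i k)
    (hswap23 : ∀ i j k, G i j k = -G i k j)
    -- prolate values: G_{213} = G_{124} = G_{136} = G_{145} = G_{516}
    --               = G_{235} = G_{246} = G_{256} = G_{435} = G_{346} = p
    (hp1 : G 1 0 2 = p) (hp2 : G 0 1 3 = p) (hp3 : G 0 2 5 = p) (hp4 : G 0 3 4 = p)
    (hp5 : G 4 0 5 = p) (hp6 : G 1 2 4 = p) (hp7 : G 1 3 5 = p) (hp8 : G 1 4 5 = p)
    (hp9 : G 3 2 4 = p) (hp10 : G 2 3 5 = p)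
    -- oblate values: G_{215} = G_{216} = G_{314} = G_{135} = G_{146}
    --              = G_{324} = G_{236} = G_{245} = G_{536} = G_{546} = q
    (hq1 : G 1 0 4 = q) (hq2 : G 1 0 5 = q) (hq3 : G 2 0 3 = q) (hq4 : G 0 2 4 = q)
    (hq5 : G 0 3 5 = q) (hq6 : G 2 1 3 = q) (hq7 : G 1 2 5 = q) (hq8 : G 1 3 4 = q)
    (hq9 : G 4 2 5 = q) (hq10 : G 4 3 5 = q)
    -- the Plücker relation G_{123}·G_{345} = G_{423}·G_{315} + G_{523}·G_{341}
    (hplucker : G 0 1 2 * G 2 3 4 = G 3 1 2 * G 2 0 4 + G 4 1 2 * G 2 3 0) :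
    q = phi * p ∨ q = (1 - phi) * p :=
  plucker_forces_golden_ratio_general p q G hswap12 hswap23 hp1 hp6 hp9 hq3 hq4 hq6 hplucker
end

section
/- Let F be a 3-dimensional linear subspace of ℝ⁶ with basis (u₁,u₂,u₃), and suppose its Grassmann coordinates G_{ijk} = G_{ijk}(u₁,u₂,u₃) satisfy both the prolate alternation equations G_{213} = G_{124} = G_{136} = G_{145} = G_{516} = G_{235} = G_{246} = G_{256} = G_{435} = G_{346} and the oblate alternation equations G_{215} = G_{216} = G_{314} = G_{135} = G_{146} = G_{324} = G_{236} = G_{245} = G_{536} = G_{546}. Then F = span(w₁,w₂,w₃) or F = span(r₁,r₂,r₃). -/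
/-- The generators of the icosahedral slope `E`. -/
noncomputable def w1 : Fin 6 → ℝ := ![phi, phi, 0, 0, 1, -1]
noncomputable def w2 : Fin 6 → ℝ := ![1, -1, phi, phi, 0, 0]
noncomputable def w3 : Fin 6 → ℝ := ![0, 0, 1, -1, phi, phi]

/-- Their algebraic conjugates, generating the conjugate slope `E'`. -/
noncomputable def r1 : Fin 6 → ℝ := ![1 - phi, 1 - phi, 0, 0, 1, -1]
noncomputable def r2 : Fin 6 → ℝ := ![1, -1, 1 - phi, 1 - phi, 0, 0]
noncomputable def r3 : Fin 6 → ℝ := ![0, 0, 1, -1, 1 - phi, 1 - phi]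

/-- The Grassmann coordinate `G_{ijk}(u₁,u₂,u₃)` (0-based indices: the paper's index `n`
is `n-1` here). -/
noncomputable def G (u₁ u₂ u₃ : Fin 6 → ℝ) (i j k : Fin 6) : ℝ :=
  Matrix.det !![u₁ i, u₂ i, u₃ i; u₁ j, u₂ j, u₃ j; u₁ k, u₂ k, u₃ k]

/-!
Write `a = G₂₃₅` and `b = G₄₃₅` (0-based indices) for the common values of the prolate and
of the oblate coordinates. By antisymmetry every one of the twenty Grassmann coordinates
`G_{ijk}`, `i < j < k`, is then `±a` or `±b`, and the Plücker relation
`G₀₁₂ G₀₃₄ - G₀₁₃ G₀₂₄ + G₀₁₄ G₀₂₃ = 0` becomes `b² = a² + ab`. By Cauchy–Binet the sum of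
the squares of the twenty coordinates is the Gram determinant `10 (a² + b²)` of the basis,
which is nonzero, so `a ≠ 0` and `t = b / a` is a root of `t² = t + 1`, i.e. `t = φ` or
`t = 1 - φ`. Finally, a subspace with `G₀₁₃ ≠ 0` is spanned by the three vectors
`l ↦ G_{l13}`, `l ↦ G_{0l3}`, `l ↦ G_{01l}`; here they are `a` times explicit vectors
spanning the slope with parameter `t`.
-/

open Submodule

section Grassmann

variable (u₁ u₂ u₃ : Fin 6 → ℝ)

lemma G_expand (i j k : Fin 6) :
    G u₁ u₂ u₃ i j k =
      u₁ i * (u₂ j * u₃ k - u₃ j * u₂ k) - u₂ i * (u₁ j * u₃ k - u₃ j * u₁ k)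
        + u₃ i * (u₁ j * u₂ k - u₂ j * u₁ k) := by
  simp only [G, Matrix.det_fin_three, Matrix.of_apply, Matrix.cons_val', Matrix.cons_val_zero,
    Matrix.cons_val_fin_one, Matrix.cons_val_one, Matrix.cons_val]
  ring

lemma G_swap_left (i j k : Fin 6) : G u₁ u₂ u₃ i j k = -G u₁ u₂ u₃ j i k := by
  simp only [G_expand]; ring

lemma G_swap_right (i j k : Fin 6) : G u₁ u₂ u₃ i j k = -G u₁ u₂ u₃ i k j := by
  simp only [G_expand]; ring

lemma G_rotate (i j k : Fin 6) : G u₁ u₂ u₃ i j k = G u₁ u₂ u₃ j k i := by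
  simp only [G_expand]; ring

@[simp] lemma G_self_left (i k : Fin 6) : G u₁ u₂ u₃ i i k = 0 := by
  simp only [G_expand]; ring

@[simp] lemma G_self_right (i j : Fin 6) : G u₁ u₂ u₃ i j j = 0 := by
  simp only [G_expand]; ring

@[simp] lemma G_self_outer (i j : Fin 6) : G u₁ u₂ u₃ i j i = 0 := by
  simp only [G_expand]; ring

lemma G_plucker (i j k l m : Fin 6) :
    G u₁ u₂ u₃ i j k * G u₁ u₂ u₃ i l m - G u₁ u₂ u₃ i j l * G u₁ u₂ u₃ i k m
      + G u₁ u₂ u₃ i j m * G u₁ u₂ u₃ i k l = 0 := by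
  simp only [G_expand]; ring

/-- Cauchy–Binet for the Gram matrix of `u₁, u₂, u₃`, which is nonsingular by independence. -/
theorem sum_sq_G_ne_zero (hind : LinearIndependent ℝ ![u₁, u₂, u₃]) :
    G u₁ u₂ u₃ 0 1 2 ^ 2 + G u₁ u₂ u₃ 0 1 3 ^ 2 + G u₁ u₂ u₃ 0 1 4 ^ 2 + G u₁ u₂ u₃ 0 1 5 ^ 2
      + G u₁ u₂ u₃ 0 2 3 ^ 2 + G u₁ u₂ u₃ 0 2 4 ^ 2 + G u₁ u₂ u₃ 0 2 5 ^ 2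
      + G u₁ u₂ u₃ 0 3 4 ^ 2 + G u₁ u₂ u₃ 0 3 5 ^ 2 + G u₁ u₂ u₃ 0 4 5 ^ 2
      + G u₁ u₂ u₃ 1 2 3 ^ 2 + G u₁ u₂ u₃ 1 2 4 ^ 2 + G u₁ u₂ u₃ 1 2 5 ^ 2
      + G u₁ u₂ u₃ 1 3 4 ^ 2 + G u₁ u₂ u₃ 1 3 5 ^ 2 + G u₁ u₂ u₃ 1 4 5 ^ 2
      + G u₁ u₂ u₃ 2 3 4 ^ 2 + G u₁ u₂ u₃ 2 3 5 ^ 2 + G u₁ u₂ u₃ 2 4 5 ^ 2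
      + G u₁ u₂ u₃ 3 4 5 ^ 2 ≠ 0 := by
  have hgram : (Matrix.gram ℝ fun m => WithLp.toLp 2 (![u₁, u₂, u₃] m)).det ≠ 0 :=
    Matrix.det_gram_ne_zero_iff_linearIndependent.mpr
      (hind.map' (WithLp.linearEquiv 2 ℝ (Fin 6 → ℝ)).symm.toLinearMap (LinearEquiv.ker _))
  convert hgram using 1
  simp only [Matrix.det_fin_three, Matrix.gram_apply, EuclideanSpace.inner_toLp_toLp,
    dotProduct, Fin.sum_univ_six, G_expand, star_trivial, Matrix.cons_val_zero,
    Matrix.cons_val_one, Matrix.cons_val]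
  ring

lemma G_row_mem_span (j k : Fin 6) :
    (fun l => G u₁ u₂ u₃ l j k) ∈ span ℝ {u₁, u₂, u₃} :=
  mem_span_triple.mpr ⟨u₂ j * u₃ k - u₃ j * u₂ k, u₃ j * u₁ k - u₁ j * u₃ k,
    u₁ j * u₂ k - u₂ j * u₁ k, by
      ext l; simp only [G_expand, Pi.add_apply, Pi.smul_apply, smul_eq_mul]; ring⟩

/-- Laplace expansion gives `G_{ijk} x = x_i P₁ + x_j P₂ + x_k P₃` for `x = u₁, u₂, u₃`, where
`P₁, P₂, P₃` are the three vectors on the right. -/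
theorem span_eq_span_G {i j k : Fin 6} (hG : G u₁ u₂ u₃ i j k ≠ 0) :
    span ℝ {u₁, u₂, u₃} = span ℝ {fun l => G u₁ u₂ u₃ l j k, fun l => G u₁ u₂ u₃ i l k,
      fun l => G u₁ u₂ u₃ i j l} := by
  apply le_antisymm
  · refine span_le.mpr fun x hx => (smul_mem_iff _ hG).mp (mem_span_triple.mpr
      ⟨x i, x j, x k, ?_⟩)
    rcases hx with rfl | rfl | rfl <;> ext l <;>
      simp only [G_expand, Pi.add_apply, Pi.smul_apply, smul_eq_mul] <;> ring
  · have h₂ : (fun l => G u₁ u₂ u₃ i l k) = fun l => G u₁ u₂ u₃ l k i :=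
      funext fun l => G_rotate _ _ _ i l k
    have h₃ : (fun l => G u₁ u₂ u₃ i j l) = fun l => G u₁ u₂ u₃ l i j :=
      funext fun l => (G_rotate _ _ _ i j l).trans (G_rotate _ _ _ j l i)
    simp only [span_le, Set.insert_subset_iff, Set.singleton_subset_iff, SetLike.mem_coe, h₂, h₃]
    exact ⟨G_row_mem_span _ _ _ j k, G_row_mem_span _ _ _ k i, G_row_mem_span _ _ _ i j⟩

end Grassmann

/-- `slopeSpace phi` is `span {w1, w2, w3}` and `slopeSpace (1 - phi)` is `span {r1, r2, r3}`. -/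
noncomputable def slopeSpace (t : ℝ) : Submodule ℝ (Fin 6 → ℝ) :=
  span ℝ {![t, t, 0, 0, 1, -1], ![1, -1, t, t, 0, 0], ![0, 0, 1, -1, t, t]}

lemma slopeSpace_eq_span {t : ℝ} (ht : t ^ 2 = t + 1) :
    slopeSpace t =
      span ℝ {![1, 0, t, 0, t, 1], ![0, 1, -t, 0, -1, -t], ![0, 0, -1, 1, -t, -t]} := by
  apply le_antisymm <;>
    simp only [slopeSpace, span_le, Set.insert_subset_iff, Set.singleton_subset_iff,
      SetLike.mem_coe, mem_span_triple]
  · refine ⟨⟨t, t, 0, ?_⟩, ⟨1, -1, t, ?_⟩, ⟨0, 0, -1, ?_⟩⟩ <;>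
      ext l <;> fin_cases l <;> simp <;> linarith
  · refine ⟨⟨(t - 1) / 2, 1 / 2, t / 2, ?_⟩, ⟨(t - 1) / 2, -1 / 2, -t / 2, ?_⟩,
      ⟨0, 0, -1, ?_⟩⟩ <;>
      ext l <;> fin_cases l <;> simp <;> linarith

lemma span_smul_triple {R M : Type*} [Ring R] [AddCommGroup M] [Module R M] {r : R}
    (hr : IsUnit r) (x y z : M) : span R {r • x, r • y, r • z} = span R {x, y, z} := by
  rw [← Set.smul_set_singleton, ← Set.smul_set_insert, ← Set.smul_set_insert,
    span_smul_eq_of_isUnit _ r hr]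

lemma eq_phi_or_eq_one_sub_phi {t : ℝ} (ht : t ^ 2 = t + 1) : t = phi ∨ t = 1 - phi := by
  have hφ : phi ^ 2 = phi + 1 := Real.goldenRatio_sq
  have hroots : (t - phi) * (t - (1 - phi)) = 0 := by linear_combination ht - hφ
  rcases mul_eq_zero.mp hroots with h | h
  exacts [Or.inl (sub_eq_zero.mp h), Or.inr (sub_eq_zero.mp h)]

/-- The prolate coordinates (fields `p…`) all equal `a` and the oblate ones (fields `o…`) all
equal `b`. -/
structure IsAlternation (u₁ u₂ u₃ : Fin 6 → ℝ) (a b : ℝ) : Prop where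
  p102 : G u₁ u₂ u₃ 1 0 2 = a
  p013 : G u₁ u₂ u₃ 0 1 3 = a
  p025 : G u₁ u₂ u₃ 0 2 5 = a
  p034 : G u₁ u₂ u₃ 0 3 4 = a
  p405 : G u₁ u₂ u₃ 4 0 5 = a
  p124 : G u₁ u₂ u₃ 1 2 4 = a
  p135 : G u₁ u₂ u₃ 1 3 5 = a
  p145 : G u₁ u₂ u₃ 1 4 5 = a
  p324 : G u₁ u₂ u₃ 3 2 4 = a
  p235 : G u₁ u₂ u₃ 2 3 5 = a
  o104 : G u₁ u₂ u₃ 1 0 4 = b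
  o105 : G u₁ u₂ u₃ 1 0 5 = b
  o203 : G u₁ u₂ u₃ 2 0 3 = b
  o024 : G u₁ u₂ u₃ 0 2 4 = b
  o035 : G u₁ u₂ u₃ 0 3 5 = b
  o213 : G u₁ u₂ u₃ 2 1 3 = b
  o125 : G u₁ u₂ u₃ 1 2 5 = b
  o134 : G u₁ u₂ u₃ 1 3 4 = b
  o425 : G u₁ u₂ u₃ 4 2 5 = b
  o435 : G u₁ u₂ u₃ 4 3 5 = b

namespace IsAlternation

variable {u₁ u₂ u₃ : Fin 6 → ℝ} {a b : ℝ}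

lemma sq_eq (h : IsAlternation u₁ u₂ u₃ a b) : b ^ 2 = a ^ 2 + a * b := by
  have hP := G_plucker u₁ u₂ u₃ 0 1 2 3 4
  rw [G_swap_left _ _ _ 0 1 2, G_swap_left _ _ _ 0 1 4, G_swap_left _ _ _ 0 2 3, h.p102, h.p034,
    h.p013, h.o024, h.o104, h.o203] at hP
  linear_combination hP

lemma sum_sq_G (h : IsAlternation u₁ u₂ u₃ a b) :
    G u₁ u₂ u₃ 0 1 2 ^ 2 + G u₁ u₂ u₃ 0 1 3 ^ 2 + G u₁ u₂ u₃ 0 1 4 ^ 2 + G u₁ u₂ u₃ 0 1 5 ^ 2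
      + G u₁ u₂ u₃ 0 2 3 ^ 2 + G u₁ u₂ u₃ 0 2 4 ^ 2 + G u₁ u₂ u₃ 0 2 5 ^ 2
      + G u₁ u₂ u₃ 0 3 4 ^ 2 + G u₁ u₂ u₃ 0 3 5 ^ 2 + G u₁ u₂ u₃ 0 4 5 ^ 2
      + G u₁ u₂ u₃ 1 2 3 ^ 2 + G u₁ u₂ u₃ 1 2 4 ^ 2 + G u₁ u₂ u₃ 1 2 5 ^ 2
      + G u₁ u₂ u₃ 1 3 4 ^ 2 + G u₁ u₂ u₃ 1 3 5 ^ 2 + G u₁ u₂ u₃ 1 4 5 ^ 2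
      + G u₁ u₂ u₃ 2 3 4 ^ 2 + G u₁ u₂ u₃ 2 3 5 ^ 2 + G u₁ u₂ u₃ 2 4 5 ^ 2
      + G u₁ u₂ u₃ 3 4 5 ^ 2 = 10 * (a ^ 2 + b ^ 2) := by
  rw [G_swap_left _ _ _ 0 1 2, G_swap_left _ _ _ 0 1 4, G_swap_left _ _ _ 0 1 5,
    G_swap_left _ _ _ 0 2 3, G_swap_left _ _ _ 0 4 5, G_swap_left _ _ _ 1 2 3,
    G_swap_left _ _ _ 2 3 4, G_swap_left _ _ _ 2 4 5, G_swap_left _ _ _ 3 4 5,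
    h.p102, h.p013, h.p025, h.p034, h.p405, h.p124, h.p135, h.p145, h.p324, h.p235,
    h.o104, h.o105, h.o203, h.o024, h.o035, h.o213, h.o125, h.o134, h.o425, h.o435]
  ring

lemma ne_zero (h : IsAlternation u₁ u₂ u₃ a b) (hind : LinearIndependent ℝ ![u₁, u₂, u₃]) :
    a ≠ 0 := by
  intro ha
  have hb : b = 0 := pow_eq_zero_iff two_ne_zero |>.mp (by rw [h.sq_eq, ha]; ring)
  exact sum_sq_G_ne_zero u₁ u₂ u₃ hind (by rw [h.sum_sq_G, ha, hb]; ring)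

theorem exists_span_eq_slopeSpace (h : IsAlternation u₁ u₂ u₃ a b)
    (hind : LinearIndependent ℝ ![u₁, u₂, u₃]) :
    ∃ t, t ^ 2 = t + 1 ∧ span ℝ {u₁, u₂, u₃} = slopeSpace t := by
  have ha := h.ne_zero hind
  obtain ⟨t, rfl⟩ : ∃ t, b = a * t := ⟨b / a, (mul_div_cancel₀ b ha).symm⟩
  have ht : t ^ 2 = t + 1 :=
    mul_left_cancel₀ (pow_ne_zero 2 ha) (by linear_combination h.sq_eq)
  have hP₁ : (fun l => G u₁ u₂ u₃ l 1 3) = a • ![1, 0, t, 0, t, 1] := by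
    ext l; fin_cases l <;> simp [h.p013, h.o213, G_rotate _ _ _ 4 1 3, h.o134,
      G_rotate _ _ _ 5 1 3, h.p135]
  have hP₂ : (fun l => G u₁ u₂ u₃ 0 l 3) = a • ![0, 1, -t, 0, -1, -t] := by
    ext l; fin_cases l <;> simp [h.p013, G_swap_left _ _ _ 0 2 3, h.o203,
      G_swap_right _ _ _ 0 4 3, h.p034, G_swap_right _ _ _ 0 5 3, h.o035]
  have hP₃ : (fun l => G u₁ u₂ u₃ 0 1 l) = a • ![0, 0, -1, 1, -t, -t] := by
    ext l; fin_cases l <;> simp [h.p013, G_swap_left _ _ _ 0 1 2, h.p102,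
      G_swap_left _ _ _ 0 1 4, h.o104, G_swap_left _ _ _ 0 1 5, h.o105]
  refine ⟨t, ht, ?_⟩
  rw [span_eq_span_G u₁ u₂ u₃ (h.p013 ▸ ha : G u₁ u₂ u₃ 0 1 3 ≠ 0), hP₁, hP₂, hP₃,
    span_smul_triple (isUnit_iff_ne_zero.mpr ha), slopeSpace_eq_span ht]

end IsAlternation

/-- A 3-dimensional subspace of ℝ⁶ whose Grassmann coordinates satisfy both the prolate
alternation equations `G_{213} = G_{124} = G_{136} = G_{145} = G_{516} = G_{235} = G_{246}
= G_{256} = G_{435} = G_{346}` and the oblate alternation equations `G_{215} = G_{216} =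
G_{314} = G_{135} = G_{146} = G_{324} = G_{236} = G_{245} = G_{536} = G_{546}` is either
the icosahedral slope or its algebraic conjugate. -/
theorem alternation_characterizes_slope (u₁ u₂ u₃ : Fin 6 → ℝ) (F : Submodule ℝ (Fin 6 → ℝ))
    (hF : F = Submodule.span ℝ ({u₁, u₂, u₃} : Set (Fin 6 → ℝ)))
    (hind : LinearIndependent ℝ ![u₁, u₂, u₃])
    -- prolate alternation equations
    (hp1 : G u₁ u₂ u₃ 1 0 2 = G u₁ u₂ u₃ 0 1 3)
    (hp2 : G u₁ u₂ u₃ 0 1 3 = G u₁ u₂ u₃ 0 2 5)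
    (hp3 : G u₁ u₂ u₃ 0 2 5 = G u₁ u₂ u₃ 0 3 4)
    (hp4 : G u₁ u₂ u₃ 0 3 4 = G u₁ u₂ u₃ 4 0 5)
    (hp5 : G u₁ u₂ u₃ 4 0 5 = G u₁ u₂ u₃ 1 2 4)
    (hp6 : G u₁ u₂ u₃ 1 2 4 = G u₁ u₂ u₃ 1 3 5)
    (hp7 : G u₁ u₂ u₃ 1 3 5 = G u₁ u₂ u₃ 1 4 5)
    (hp8 : G u₁ u₂ u₃ 1 4 5 = G u₁ u₂ u₃ 3 2 4)
    (hp9 : G u₁ u₂ u₃ 3 2 4 = G u₁ u₂ u₃ 2 3 5)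
    -- oblate alternation equations
    (hq1 : G u₁ u₂ u₃ 1 0 4 = G u₁ u₂ u₃ 1 0 5)
    (hq2 : G u₁ u₂ u₃ 1 0 5 = G u₁ u₂ u₃ 2 0 3)
    (hq3 : G u₁ u₂ u₃ 2 0 3 = G u₁ u₂ u₃ 0 2 4)
    (hq4 : G u₁ u₂ u₃ 0 2 4 = G u₁ u₂ u₃ 0 3 5)
    (hq5 : G u₁ u₂ u₃ 0 3 5 = G u₁ u₂ u₃ 2 1 3)
    (hq6 : G u₁ u₂ u₃ 2 1 3 = G u₁ u₂ u₃ 1 2 5)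
    (hq7 : G u₁ u₂ u₃ 1 2 5 = G u₁ u₂ u₃ 1 3 4)
    (hq8 : G u₁ u₂ u₃ 1 3 4 = G u₁ u₂ u₃ 4 2 5)
    (hq9 : G u₁ u₂ u₃ 4 2 5 = G u₁ u₂ u₃ 4 3 5)
    :
    F = Submodule.span ℝ ({w1, w2, w3} : Set (Fin 6 → ℝ)) ∨
    F = Submodule.span ℝ ({r1, r2, r3} : Set (Fin 6 → ℝ)) := by
  have h : IsAlternation u₁ u₂ u₃ (G u₁ u₂ u₃ 2 3 5) (G u₁ u₂ u₃ 4 3 5) := by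
    -- rewriting along each chain sends every coordinate in it to the chain's last one
    constructor <;> simp only [hp1, hp2, hp3, hp4, hp5, hp6, hp7, hp8, hp9, hq1, hq2, hq3, hq4,
      hq5, hq6, hq7, hq8, hq9]
  obtain ⟨t, ht, hspan⟩ := h.exists_span_eq_slopeSpace hind
  rw [hF, hspan]
  rcases eq_phi_or_eq_one_sub_phi ht with rfl | rfl
  exacts [Or.inl rfl, Or.inr rfl]
end

section
/- The Grassmann coordinates G_{ijk} = G_{ijk}(r₁,r₂,r₃) of the conjugate slope E′ = span(r₁,r₂,r₃) also satisfy the prolate alternation equations G_{213} = G_{124} = G_{136} = G_{145} = G_{516} = G_{235} = G_{246} = G_{256} = G_{435} = G_{346} and the oblate alternation equations G_{215} = G_{216} = G_{314} = G_{135} = G_{146} = G_{324} = G_{236} = G_{245} = G_{536} = G_{546}, with the common oblate value equal to (1−φ) times the common prolate value, and the prolate value nonzero. -/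
/-!
The generators of `E` and `E'` are one family `v₁ t, v₂ t, v₃ t` evaluated at the two roots
`φ` and `1 - φ` of `t² = t + 1`. For any such root each prolate coordinate is `2t` or `t³ - 1`,
and each oblate one is `2t²` or `t³ + 1`; reducing with `t² = t + 1` makes them `2t` and `t · 2t`.
For `E'` the prolate value `2(1 - φ)` is nonzero since `1 - φ` is the conjugate `ψ ≠ 0`.
-/

namespace IcosahedralSlope

def v₁ (t : ℝ) : Fin 6 → ℝ := ![t, t, 0, 0, 1, -1]
def v₂ (t : ℝ) : Fin 6 → ℝ := ![1, -1, t, t, 0, 0]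
def v₃ (t : ℝ) : Fin 6 → ℝ := ![0, 0, 1, -1, t, t]

def prolateTriples : List (Fin 6 × Fin 6 × Fin 6) :=
  [(1, 0, 2), (0, 1, 3), (0, 2, 5), (0, 3, 4), (4, 0, 5),
   (1, 2, 4), (1, 3, 5), (1, 4, 5), (3, 2, 4), (2, 3, 5)]

def oblateTriples : List (Fin 6 × Fin 6 × Fin 6) :=
  [(1, 0, 4), (1, 0, 5), (2, 0, 3), (0, 2, 4), (0, 3, 5),
   (2, 1, 3), (1, 2, 5), (1, 3, 4), (4, 2, 5), (4, 3, 5)]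

variable {t : ℝ}

theorem G_of_mem_prolateTriples (ht : t ^ 2 = t + 1) {i j k : Fin 6}
    (h : (i, j, k) ∈ prolateTriples) : G (v₁ t) (v₂ t) (v₃ t) i j k = 2 * t := by
  simp only [prolateTriples, List.mem_cons, Prod.mk.injEq, List.not_mem_nil, or_false] at h
  rcases h with ⟨rfl, rfl, rfl⟩ | ⟨rfl, rfl, rfl⟩ | ⟨rfl, rfl, rfl⟩ | ⟨rfl, rfl, rfl⟩ |
    ⟨rfl, rfl, rfl⟩ | ⟨rfl, rfl, rfl⟩ | ⟨rfl, rfl, rfl⟩ | ⟨rfl, rfl, rfl⟩ | ⟨rfl, rfl, rfl⟩ |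
    ⟨rfl, rfl, rfl⟩ <;>
  simp only [G, v₁, v₂, v₃, Matrix.det_fin_three, Matrix.of_apply, Matrix.cons_val,
    Matrix.cons_val_zero, Matrix.cons_val_one, Matrix.cons_val', Matrix.cons_val_fin_one] <;>
  first | ring1 | linear_combination (t + 1) * ht

theorem G_of_mem_oblateTriples (ht : t ^ 2 = t + 1) {i j k : Fin 6}
    (h : (i, j, k) ∈ oblateTriples) : G (v₁ t) (v₂ t) (v₃ t) i j k = t * (2 * t) := by
  simp only [oblateTriples, List.mem_cons, Prod.mk.injEq, List.not_mem_nil, or_false] at h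
  rcases h with ⟨rfl, rfl, rfl⟩ | ⟨rfl, rfl, rfl⟩ | ⟨rfl, rfl, rfl⟩ | ⟨rfl, rfl, rfl⟩ |
    ⟨rfl, rfl, rfl⟩ | ⟨rfl, rfl, rfl⟩ | ⟨rfl, rfl, rfl⟩ | ⟨rfl, rfl, rfl⟩ | ⟨rfl, rfl, rfl⟩ |
    ⟨rfl, rfl, rfl⟩ <;>
  simp only [G, v₁, v₂, v₃, Matrix.det_fin_three, Matrix.of_apply, Matrix.cons_val,
    Matrix.cons_val_zero, Matrix.cons_val_one, Matrix.cons_val', Matrix.cons_val_fin_one] <;>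
  first | ring1 | linear_combination (t - 1) * ht

end IcosahedralSlope

open IcosahedralSlope in
/-- The Grassmann coordinates of the conjugate slope `E' = span(r₁,r₂,r₃)` also satisfy
the prolate and oblate alternation equations, with the common oblate value equal to
`(1−φ)` times the common prolate value, which is nonzero. -/
theorem conjugate_slope_alternation :
    G r1 r2 r3 1 0 2 = G r1 r2 r3 0 1 3 ∧
    G r1 r2 r3 0 1 3 = G r1 r2 r3 0 2 5 ∧
    G r1 r2 r3 0 2 5 = G r1 r2 r3 0 3 4 ∧
    G r1 r2 r3 0 3 4 = G r1 r2 r3 4 0 5 ∧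
    G r1 r2 r3 4 0 5 = G r1 r2 r3 1 2 4 ∧
    G r1 r2 r3 1 2 4 = G r1 r2 r3 1 3 5 ∧
    G r1 r2 r3 1 3 5 = G r1 r2 r3 1 4 5 ∧
    G r1 r2 r3 1 4 5 = G r1 r2 r3 3 2 4 ∧
    G r1 r2 r3 3 2 4 = G r1 r2 r3 2 3 5 ∧
    G r1 r2 r3 1 0 4 = G r1 r2 r3 1 0 5 ∧
    G r1 r2 r3 1 0 5 = G r1 r2 r3 2 0 3 ∧
    G r1 r2 r3 2 0 3 = G r1 r2 r3 0 2 4 ∧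
    G r1 r2 r3 0 2 4 = G r1 r2 r3 0 3 5 ∧
    G r1 r2 r3 0 3 5 = G r1 r2 r3 2 1 3 ∧
    G r1 r2 r3 2 1 3 = G r1 r2 r3 1 2 5 ∧
    G r1 r2 r3 1 2 5 = G r1 r2 r3 1 3 4 ∧
    G r1 r2 r3 1 3 4 = G r1 r2 r3 4 2 5 ∧
    G r1 r2 r3 4 2 5 = G r1 r2 r3 4 3 5 ∧
    G r1 r2 r3 1 0 4 = (1 - phi) * G r1 r2 r3 1 0 2 ∧
    G r1 r2 r3 1 0 2 ≠ 0 := by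
  have hψ : (1 - phi) ^ 2 = (1 - phi) + 1 := Real.one_sub_goldenConj ▸ Real.goldenConj_sq
  have hψ₀ : 1 - phi ≠ 0 := Real.one_sub_goldenConj ▸ Real.goldenConj_ne_zero
  rw [show r1 = v₁ (1 - phi) from rfl, show r2 = v₂ (1 - phi) from rfl,
    show r3 = v₃ (1 - phi) from rfl]
  simp (disch := decide) only [G_of_mem_prolateTriples hψ, G_of_mem_oblateTriples hψ, true_and]
  exact mul_ne_zero two_ne_zero hψ₀
end
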